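/- Fix real constants m₀ > 0, ω > 0, ħ > 0, a > -1, set λ₀ = √(m₀ω/ħ) and ξ(x) = λ₀^{a+1}·(a+1)^{-1/2}·|x|^a·x. For a nonnegative integer n define ψₙ(x) = (λ₀²x²)^{a/4}·exp( -(λ₀²x²)^{a+1}/(2(a+1)) )·Heₙ(√2·ξ(x)), where Heₙ is the probabilist's Hermite polynomial (so Heₙ(√2 u) is proportional to the physicist's Hermite polynomial Hₙ(u)). Then for every x ≠ 0: ψₙ''(x) - (2a/x)·ψₙ'(x) + [ a(3a+2)/(4x²) + κₙ²λ₀^{2a}|x|^{2a} - λ₀^{4a+4}|x|^{4a}x² ]·ψₙ(x) = 0, where κₙ² = λ₀²·(a+1)·(2n+1); equivalently ψₙ is a solution of the Schrödinger equation with energy Eₙ = ħ²κₙ²/(2m₀) = (a+1)·ħω·(n + 1/2). -/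

import Mathlib

/-!
Put `t(x) = √2·ξ(x)`. Since `(a+1)·ξ(x)² = (λ₀²x²)^(a+1)`, the exponential factor of `ψₙ` is
`exp(-t²/4)`, so `ψₙ = g · (Dₙ ∘ t)` with `g(x) = (λ₀²x²)^(a/4)` and `Dₙ(t) = e^(-t²/4) Heₙ(t)` the
parabolic cylinder function; Hermite's equation `Heₙ'' = t Heₙ' - n Heₙ` turns into Weber's
equation `Dₙ'' = (t²/4 - n - 1/2) Dₙ`. Both `g` and `t` are homogeneous on `ℝ \ {0}`, of degrees
`p = a/2` and `q = a+1`. For `ψ = g · (φ ∘ t)` with such `g`, `t`, the chain rule gives an equation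
in which the coefficient `-(2p+q-1)/x = -2a/x` of `ψ'` cancels every `φ'` term, leaving the
centrifugal term `p(p+q)/x² = a(3a+2)/(4x²)` and the potential `t'²·(t²/4 - n - 1/2)`, which
in terms of `x` is `λ₀^(4a+4)|x|^(4a)x² - κₙ²λ₀^(2a)|x|^(2a)`.
-/

/-- The point canonical transformation `ξ(x) = λ₀^(a+1)·(a+1)^(-1/2)·|x|^a·x`. -/
noncomputable def xiPCT (lam a : ℝ) (x : ℝ) : ℝ :=
  lam ^ (a + 1) * (a + 1) ^ (-(1 : ℝ) / 2) * (|x| ^ a * x)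

/-- The stationary-state wavefunction
`ψₙ(x) = (λ₀²x²)^(a/4)·exp(-(λ₀²x²)^(a+1)/(2(a+1)))·Heₙ(√2·ξ(x))`,
where `Heₙ` is the probabilist's Hermite polynomial. -/
noncomputable def psiHO (lam a : ℝ) (n : ℕ) (x : ℝ) : ℝ :=
  (lam ^ 2 * x ^ 2) ^ (a / 4) * Real.exp (-((lam ^ 2 * x ^ 2) ^ (a + 1)) / (2 * (a + 1)))
    * Polynomial.aeval (Real.sqrt 2 * xiPCT lam a x) (Polynomial.hermite n)

open Polynomial

namespace Polynomial

theorem derivative_hermite_succ (n : ℕ) :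
    derivative (hermite (n + 1)) = (n + 1 : ℤ[X]) * hermite n := by
  induction n with
  | zero => simp [hermite_zero]
  | succ n ih =>
    rw [hermite_succ (n + 1), derivative_sub, derivative_mul, derivative_X, one_mul, ih,
      derivative_mul, hermite_succ n]
    simp only [derivative_add, derivative_natCast, derivative_one]
    push_cast
    ring

theorem derivative_derivative_hermite (n : ℕ) :
    derivative (derivative (hermite n)) = X * derivative (hermite n) - (n : ℤ[X]) * hermite n := by
  cases n with
  | zero => simp
  | succ n =>
    rw [derivative_hermite_succ, derivative_mul, hermite_succ n]
    simp only [derivative_add, derivative_natCast, derivative_one]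
    push_cast
    ring

end Polynomial

theorem hasDerivAt_exp_neg_sq_div_four_mul {f : ℝ → ℝ} {f' s : ℝ} (hf : HasDerivAt f f' s) :
    HasDerivAt (fun s => Real.exp (-s ^ 2 / 4) * f s)
      (Real.exp (-s ^ 2 / 4) * (f' - s / 2 * f s)) s := by
  have hsq : HasDerivAt (fun s : ℝ => -s ^ 2 / 4) (-s / 2) s := by
    refine (((hasDerivAt_pow 2 s).fun_neg).div_const 4).congr_deriv ?_
    norm_num
    ring
  refine (hsq.exp.mul hf).congr_deriv ?_
  ring

noncomputable def parabolicCylinder (n : ℕ) (s : ℝ) : ℝ :=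
  Real.exp (-s ^ 2 / 4) * aeval s (hermite n)

theorem hasDerivAt_parabolicCylinder (n : ℕ) (s : ℝ) :
    HasDerivAt (parabolicCylinder n)
      (Real.exp (-s ^ 2 / 4) * (aeval s (derivative (hermite n)) - s / 2 * aeval s (hermite n)))
      s :=
  hasDerivAt_exp_neg_sq_div_four_mul (Polynomial.hasDerivAt_aeval _ s)

theorem differentiable_parabolicCylinder (n : ℕ) : Differentiable ℝ (parabolicCylinder n) :=
  fun s => (hasDerivAt_parabolicCylinder n s).differentiableAt

theorem hasDerivAt_deriv_parabolicCylinder (n : ℕ) (s : ℝ) :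
    HasDerivAt (deriv (parabolicCylinder n))
      ((s ^ 2 / 4 - n - 1 / 2) * parabolicCylinder n s) s := by
  have hderiv : deriv (parabolicCylinder n) = fun s => Real.exp (-s ^ 2 / 4) *
      (aeval s (derivative (hermite n)) - s / 2 * aeval s (hermite n)) :=
    funext fun s => (hasDerivAt_parabolicCylinder n s).deriv
  rw [hderiv]
  refine (hasDerivAt_exp_neg_sq_div_four_mul (((Polynomial.hasDerivAt_aeval _ s).sub
    (((hasDerivAt_id s).div_const 2).mul (Polynomial.hasDerivAt_aeval _ s))))).congr_deriv ?_
  simp only [parabolicCylinder, derivative_derivative_hermite, map_sub, map_mul, aeval_X,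
    map_natCast, id, Pi.sub_apply, Pi.mul_apply]
  ring

theorem deriv_deriv_mul_comp_of_homogeneous {g t φ V : ℝ → ℝ} {p q x : ℝ}
    (hg : ∀ y ≠ 0, HasDerivAt g (p * g y / y) y) (ht : ∀ y ≠ 0, HasDerivAt t (q * t y / y) y)
    (hφ : Differentiable ℝ φ) (hφ' : ∀ s, HasDerivAt (deriv φ) (V s * φ s) s) (hx : x ≠ 0) :
    deriv (deriv fun y => g y * φ (t y)) x
        - (2 * p + q - 1) / x * deriv (fun y => g y * φ (t y)) x
        + p * (p + q) / x ^ 2 * (g x * φ (t x))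
      = (q * t x / x) ^ 2 * V (t x) * (g x * φ (t x)) := by
  have hψ : ∀ y ≠ 0, HasDerivAt (fun y => g y * φ (t y))
      (g y / y * (p * φ (t y) + q * t y * deriv φ (t y))) y := by
    intro y hy
    refine ((hg y hy).mul ((hφ (t y)).hasDerivAt.comp y (ht y hy))).congr_deriv ?_
    simp only [Function.comp_apply]
    field_simp
  have hψ' : HasDerivAt (fun y => g y / y * (p * φ (t y) + q * t y * deriv φ (t y)))
      (g x / x ^ 2 * ((p - 1) * (p * φ (t x) + q * t x * deriv φ (t x))
        + (p * q * t x * deriv φ (t x) + q * q * t x * deriv φ (t x)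
          + q * t x * (V (t x) * φ (t x) * (q * t x))))) x := by
    have hφt := (hφ (t x)).hasDerivAt.comp x (ht x hx)
    have hφ't := (hφ' (t x)).comp x (ht x hx)
    refine (((hg x hx).div (hasDerivAt_id x) hx).mul
      ((hφt.const_mul p).add (((ht x hx).const_mul q).mul hφ't))).congr_deriv ?_
    simp only [id, Function.comp_apply, Pi.add_apply, Pi.mul_apply, Pi.div_apply]
    field_simp
    ring
  have hderiv : deriv (fun y => g y * φ (t y)) =ᶠ[nhds x]
      fun y => g y / y * (p * φ (t y) + q * t y * deriv φ (t y)) :=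
    Filter.eventuallyEq_of_mem (compl_singleton_mem_nhds hx) fun y hy => (hψ y hy).deriv
  rw [hderiv.deriv_eq, hψ'.deriv, (hψ x hx).deriv]
  field_simp
  ring

theorem abs_rpow_eq_sq_rpow (x a : ℝ) : |x| ^ a = (x ^ 2) ^ (a / 2) := by
  rw [← sq_abs x, ← Real.rpow_two, ← Real.rpow_mul (abs_nonneg x)]
  ring_nf

theorem rpow_mul_abs_rpow {lam : ℝ} (hlam : 0 ≤ lam) (x b : ℝ) :
    lam ^ (2 * b) * |x| ^ (2 * b) = (lam ^ 2 * x ^ 2) ^ b := by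
  rw [← Real.mul_rpow hlam (abs_nonneg x), Real.rpow_mul (by positivity), Real.rpow_two, mul_pow,
    sq_abs]

theorem hasDerivAt_sq_rpow (b : ℝ) {x : ℝ} (hx : x ≠ 0) :
    HasDerivAt (fun y : ℝ => (y ^ 2) ^ b) (2 * b * (x ^ 2) ^ b / x) x := by
  refine ((hasDerivAt_pow 2 x).rpow_const (Or.inl (pow_ne_zero 2 hx))).congr_deriv ?_
  rw [Real.rpow_sub_one (pow_ne_zero 2 hx)]
  field_simp
  ring

theorem hasDerivAt_mul_sq_rpow {c : ℝ} (hc : 0 ≤ c) (b : ℝ) {x : ℝ} (hx : x ≠ 0) :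
    HasDerivAt (fun y : ℝ => (c * y ^ 2) ^ b) (2 * b * (c * x ^ 2) ^ b / x) x := by
  have hsplit : ∀ y : ℝ, (c * y ^ 2) ^ b = c ^ b * (y ^ 2) ^ b :=
    fun y => Real.mul_rpow hc (sq_nonneg y)
  simp only [hsplit]
  exact ((hasDerivAt_sq_rpow b hx).const_mul (c ^ b)).congr_deriv (by ring)

theorem hasDerivAt_xiPCT (lam a : ℝ) {x : ℝ} (hx : x ≠ 0) :
    HasDerivAt (xiPCT lam a) ((a + 1) * xiPCT lam a x / x) x := by
  have hxi : xiPCT lam a = fun y => lam ^ (a + 1) * (a + 1) ^ (-(1 : ℝ) / 2) *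
      ((y ^ 2) ^ (a / 2) * y) := by
    funext y
    rw [xiPCT, abs_rpow_eq_sq_rpow]
  rw [hxi]
  refine (((hasDerivAt_sq_rpow (a / 2) hx).mul (hasDerivAt_id x)).const_mul _).congr_deriv ?_
  simp only [id]
  field_simp

theorem mul_sq_xiPCT {lam a : ℝ} (hlam : 0 ≤ lam) (ha : -1 < a) (x : ℝ) :
    (a + 1) * xiPCT lam a x ^ 2 = (lam ^ 2 * x ^ 2) ^ (a + 1) := by
  have ha1 : 0 < a + 1 := by linarith
  have hinv : ((a + 1) ^ (-(1 : ℝ) / 2)) ^ 2 = (a + 1)⁻¹ := by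
    rw [← Real.rpow_mul_natCast ha1.le, ← Real.rpow_neg_one]
    norm_num
  rw [← sq_abs x, ← mul_pow, ← Real.rpow_natCast_mul (by positivity), mul_comm ((2 : ℕ) : ℝ),
    Real.rpow_mul_natCast (by positivity), Real.mul_rpow hlam (abs_nonneg x),
    Real.rpow_add_one' (abs_nonneg x) ha1.ne', xiPCT]
  simp only [mul_pow, hinv, sq_abs]
  field_simp

theorem psiHO_eq {lam a : ℝ} (hlam : 0 ≤ lam) (ha : -1 < a) (n : ℕ) :
    psiHO lam a n = fun y => (lam ^ 2 * y ^ 2) ^ (a / 4)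
      * parabolicCylinder n (Real.sqrt 2 * xiPCT lam a y) := by
  have ha1 : a + 1 ≠ 0 := by linarith
  funext y
  rw [psiHO, parabolicCylinder, ← mul_sq_xiPCT hlam ha y, mul_pow,
    Real.sq_sqrt zero_le_two, mul_assoc]
  congr 3
  field_simp
  ring

theorem weberPotential_comp_xiPCT {lam a : ℝ} (hlam : 0 < lam) (ha : -1 < a) (n : ℕ) {x : ℝ}
    (hx : x ≠ 0) :
    ((a + 1) * (Real.sqrt 2 * xiPCT lam a x) / x) ^ 2
        * ((Real.sqrt 2 * xiPCT lam a x) ^ 2 / 4 - n - 1 / 2)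
      = lam ^ (4 * a + 4) * |x| ^ (4 * a) * x ^ 2
        - (lam ^ 2 * (a + 1) * (2 * (n : ℝ) + 1)) * lam ^ (2 * a) * |x| ^ (2 * a) := by
  have hL : 0 < lam ^ 2 * x ^ 2 := by positivity
  have ha1 : a + 1 ≠ 0 := by linarith
  have hξ : (Real.sqrt 2 * xiPCT lam a x) ^ 2
      = 2 * (lam ^ 2 * x ^ 2) ^ a * (lam ^ 2 * x ^ 2) / (a + 1) := by
    rw [mul_pow, Real.sq_sqrt zero_le_two, mul_assoc, ← Real.rpow_add_one hL.ne',
      ← mul_sq_xiPCT hlam.le ha x]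
    field_simp
  have h2a := rpow_mul_abs_rpow hlam.le x a
  have h4a : lam ^ (4 * a + 4) * |x| ^ (4 * a) = ((lam ^ 2 * x ^ 2) ^ a) ^ 2 * lam ^ 4 := by
    rw [show 4 * a + 4 = 2 * (2 * a) + (4 : ℕ) by push_cast; ring, Real.rpow_add hlam,
      Real.rpow_natCast, show 4 * a = 2 * (2 * a) by ring, mul_right_comm,
      rpow_mul_abs_rpow hlam.le, mul_comm 2 a, Real.rpow_mul hL.le, Real.rpow_two]
  rw [mul_assoc _ (lam ^ (2 * a)), h2a, h4a, div_pow, mul_pow (a + 1), hξ]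
  field_simp
  ring

theorem psiHO_ode {lam a : ℝ} (hlam : 0 < lam) (ha : -1 < a) (n : ℕ) {x : ℝ} (hx : x ≠ 0) :
    deriv (deriv (psiHO lam a n)) x - (2 * a / x) * deriv (psiHO lam a n) x
      + (a * (3 * a + 2) / (4 * x ^ 2)
          + (lam ^ 2 * (a + 1) * (2 * (n : ℝ) + 1)) * lam ^ (2 * a) * |x| ^ (2 * a)
          - lam ^ (4 * a + 4) * |x| ^ (4 * a) * x ^ 2) * psiHO lam a n x = 0 := by
  have key := deriv_deriv_mul_comp_of_homogeneous (p := a / 2) (q := a + 1)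
    (V := fun s => s ^ 2 / 4 - n - 1 / 2)
    (fun y hy => (hasDerivAt_mul_sq_rpow (sq_nonneg lam) (a / 4) hy).congr_deriv (by ring))
    (fun y hy => ((hasDerivAt_xiPCT lam a hy).const_mul (Real.sqrt 2)).congr_deriv (by ring))
    (differentiable_parabolicCylinder n) (hasDerivAt_deriv_parabolicCylinder n) hx
  rw [psiHO_eq hlam.le ha]
  linear_combination key + weberPotential_comp_xiPCT hlam ha n hx * ((lam ^ 2 * x ^ 2) ^ (a / 4)
      * parabolicCylinder n (Real.sqrt 2 * xiPCT lam a x))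

/-- `ψₙ` solves the Schrödinger equation of the deformed oscillator with
`κₙ² = λ₀²(a+1)(2n+1)`; equivalently, the energy is `Eₙ = ħ²κₙ²/(2m₀) = (a+1)ħω(n+1/2)`. -/
theorem stmt8 (m₀ ω hbar a : ℝ) (hm₀ : 0 < m₀) (hω : 0 < ω) (hhb : 0 < hbar) (ha : -1 < a)
    (lam : ℝ) (hlam : lam = Real.sqrt (m₀ * ω / hbar)) (n : ℕ) :
    (∀ x : ℝ, x ≠ 0 →
      deriv (deriv (psiHO lam a n)) x - (2 * a / x) * deriv (psiHO lam a n) x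
        + (a * (3 * a + 2) / (4 * x ^ 2)
            + (lam ^ 2 * (a + 1) * (2 * (n : ℝ) + 1)) * lam ^ (2 * a) * |x| ^ (2 * a)
            - lam ^ (4 * a + 4) * |x| ^ (4 * a) * x ^ 2) * psiHO lam a n x = 0) ∧
    hbar ^ 2 * (lam ^ 2 * (a + 1) * (2 * (n : ℝ) + 1)) / (2 * m₀)
      = (a + 1) * hbar * ω * ((n : ℝ) + 1 / 2) := by
  have hlam_pos : 0 < lam := hlam ▸ Real.sqrt_pos.mpr (by positivity)
  refine ⟨fun x hx => psiHO_ode hlam_pos ha n hx, ?_⟩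
  rw [hlam, Real.sq_sqrt (by positivity)]
  field_simp
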